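/- arXiv:1902.02608 — 2 statements merged into one kernel-verified Lean document; each statement's English description precedes it below -/
import Mathlib

section
/- Let T be a tree on n ≥ 3 vertices. Then the least eigenvalue of its eccentricity matrix is at most −2, with equality if and only if T is the star K_{1,n−1}. -/
open Matrix

/-- The eccentricity of a vertex: the largest distance from it to any vertex. -/
noncomputable def SimpleGraph.ecc {V : Type*} [Fintype V] (G : SimpleGraph V) (v : V) : ℕ :=
  Finset.univ.sup (G.dist v)

/-- The eccentricity matrix of a graph: `ε(G)_{uw} = d(u,w)` if
`d(u,w) = min{e(u), e(w)}`, and `0` otherwise. -/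
noncomputable def SimpleGraph.eccMatrix {V : Type*} [Fintype V] (G : SimpleGraph V) :
    Matrix V V ℝ :=
  Matrix.of fun u w =>
    if G.dist u w = min (G.ecc u) (G.ecc w) then (G.dist u w : ℝ) else 0

/-! For a symmetric matrix `A` with zero diagonal, the test vector `e_i - e_j` has Rayleigh
quotient `-A i j`, so the least eigenvalue of `A` is at most `-A i j`. A diametral pair `u, w`
of a connected graph has `ε u w = diam`, whence the least eigenvalue of `ε` is at most `-diam`.
A tree of diameter at most `2` is a star (the neighbour of a leaf is adjacent to every vertex),
so for non-star trees the least eigenvalue is at most `-3`. For the star with centre `r` on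
`n ≥ 3` vertices, two leaves give the bound `-2`, and
`ε + 2 I = 𝟙 𝟙ᵀ + (𝟙 - e_r)(𝟙 - e_r)ᵀ + e_r e_rᵀ` is positive semidefinite. -/

namespace Matrix.IsHermitian

variable {n : Type*} [Fintype n] [DecidableEq n] {A : Matrix n n ℝ}

theorem posSemidef_sub_smul_one_iff (hA : A.IsHermitian) (c : ℝ) :
    (A - c • 1).PosSemidef ↔ ∀ μ ∈ spectrum ℝ A, c ≤ μ := by
  have hc : (c • 1 : Matrix n n ℝ).IsHermitian := isHermitian_one.smul (.all c)
  rw [posSemidef_iff_isHermitian_and_spectrum_nonneg, and_iff_right (hA.sub hc),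
    ← Algebra.algebraMap_eq_smul_one, ← spectrum.sub_singleton_eq]
  simp [Set.subset_def]

theorem le_sInf_spectrum_iff [Nonempty n] (hA : A.IsHermitian) (c : ℝ) :
    c ≤ sInf (spectrum ℝ A) ↔ (A - c • 1).PosSemidef := by
  rw [hA.posSemidef_sub_smul_one_iff, le_csInf_iff A.finite_real_spectrum.bddBelow
    (hA.spectrum_real_eq_range_eigenvalues ▸ Set.range_nonempty _)]

theorem sInf_spectrum_le_neg_apply (hA : A.IsHermitian) (hdiag : ∀ i, A i i = 0) {i j : n}
    (hij : i ≠ j) : sInf (spectrum ℝ A) ≤ -A i j := by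
  have : Nonempty n := ⟨i⟩
  have hform := ((hA.le_sInf_spectrum_iff _).1 le_rfl).dotProduct_mulVec_nonneg
    (Pi.single i 1 - Pi.single j 1)
  have hji : A j i = A i j := hA.apply i j
  simp only [star_trivial, mulVec_sub, mulVec_single, MulOpposite.op_one, one_smul, dotProduct_sub,
    sub_dotProduct, single_dotProduct, col_apply, sub_apply, hdiag, smul_apply, one_apply_eq,
    smul_eq_mul, mul_one, zero_sub, mul_neg, one_mul, hji, ne_eq, hij.symm, not_false_eq_true,
    one_apply_ne, mul_zero, sub_zero, hij, sub_neg_eq_add, sub_nonneg] at hform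
  linarith

end Matrix.IsHermitian

namespace SimpleGraph

variable {V : Type*} {G : SimpleGraph V}

theorem adj_of_edist_le_two_of_unique_adj {l v w : V} (hv : G.Adj l v)
    (huniq : ∀ y, G.Adj l y → y = v) (hw : w ≠ v) (hlw : G.edist l w ≤ 2) : G.Adj v w := by
  obtain rfl | hlw' := eq_or_ne l w
  · exact hv.symm
  have hnadj : ¬G.Adj l w := fun h => hw (huniq w h)
  have hcommon : (G.commonNeighbors l w).Nonempty := by
    by_contra hempty
    rw [Set.not_nonempty_iff_eq_empty] at hempty
    exact (two_lt_edist_iff.mpr ⟨hlw', hnadj, hempty⟩).not_ge hlw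
  obtain ⟨y, hly, hwy⟩ := hcommon
  exact huniq y hly ▸ (hwy : G.Adj w y).symm

theorem Connected.ediam_ne_top [Finite V] (hG : G.Connected) : G.ediam ≠ ⊤ :=
  have := hG.nonempty
  connected_iff_ediam_ne_top.mp hG

theorem IsTree.exists_isUniversal_of_diam_le_two [Finite V] [Nontrivial V] (hT : G.IsTree)
    (hdiam : G.diam ≤ 2) : ∃ v, G.IsUniversal v := by
  classical
  have := Fintype.ofFinite V
  obtain ⟨l, hl⟩ := hT.exists_vert_degree_one_of_nontrivial
  obtain ⟨v, hv, huniq⟩ := degree_eq_one_iff_existsUnique_adj.mp hl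
  have hediam : G.ediam ≠ ⊤ := hT.connected.ediam_ne_top
  refine ⟨v, fun w hw => adj_of_edist_le_two_of_unique_adj hv huniq hw.symm ?_⟩
  calc G.edist l w ≤ G.ediam := edist_le_ediam
    _ = G.diam := (ENat.natCast_toNat hediam).symm
    _ ≤ 2 := by exact_mod_cast hdiam

theorem IsAcyclic.eq_starGraph_of_isUniversal (hG : G.IsAcyclic) {r : V} (hr : G.IsUniversal r) :
    G = starGraph r := by
  classical
  ext x y
  rw [starGraph_adj]
  refine ⟨fun hxy => ⟨hxy.ne, ?_⟩, ?_⟩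
  · by_contra! hxyr
    exact hG.cliqueFree le_rfl {r, x, y}
      (is3Clique_triple_iff.mpr ⟨hr hxyr.1.symm, hr hxyr.2.symm, hxy⟩)
  · rintro ⟨hxy, rfl | rfl⟩
    · exact hr hxy
    · exact (hr hxy.symm).symm


section Eccentricity

variable [Fintype V]

theorem eccMatrix_isHermitian (G : SimpleGraph V) : G.eccMatrix.IsHermitian := by
  ext u w
  simp only [conjTranspose_apply, eccMatrix, of_apply, star_trivial, dist_comm, min_comm]

theorem eccMatrix_apply_self (G : SimpleGraph V) (v : V) : G.eccMatrix v v = 0 := by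
  simp [eccMatrix]

theorem dist_le_ecc (G : SimpleGraph V) (u w : V) : G.dist u w ≤ G.ecc u :=
  Finset.le_sup (Finset.mem_univ w)

theorem ecc_le_diam (hG : G.Connected) (u : V) : G.ecc u ≤ G.diam :=
  Finset.sup_le fun _ _ => dist_le_diam hG.ediam_ne_top

theorem eccMatrix_apply_of_dist_eq_diam (hG : G.Connected) {u w : V}
    (h : G.dist u w = G.diam) : G.eccMatrix u w = G.diam := by
  have hu : G.ecc u = G.diam := le_antisymm (ecc_le_diam hG u) (h ▸ G.dist_le_ecc u w)
  have hw : G.ecc w = G.diam :=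
    le_antisymm (ecc_le_diam hG w) (h ▸ dist_comm (G := G) ▸ G.dist_le_ecc w u)
  simp [eccMatrix, hu, hw, h]

theorem sInf_spectrum_eccMatrix_le_neg_diam [DecidableEq V] [Nontrivial V] (hG : G.Connected) :
    sInf (spectrum ℝ G.eccMatrix) ≤ -G.diam := by
  have : Nonempty V := hG.nonempty
  obtain ⟨u, w, h⟩ := G.exists_dist_eq_diam
  have huw : u ≠ w := by
    rintro rfl
    exact diam_ne_zero_of_ediam_ne_top hG.ediam_ne_top (by simpa using h.symm)
  rw [← eccMatrix_apply_of_dist_eq_diam hG h]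
  exact G.eccMatrix_isHermitian.sInf_spectrum_le_neg_apply G.eccMatrix_apply_self huw

end Eccentricity

section Star

variable [DecidableEq V]

theorem dist_starGraph (r x y : V) :
    (starGraph r).dist x y = if x = y then 0 else if x = r ∨ y = r then 1 else 2 := by
  split_ifs with hxy hr
  · simp [hxy]
  · exact dist_eq_one_iff_adj.mpr (starGraph_adj.mpr ⟨hxy, hr⟩)
  · rw [not_or] at hr
    have : (starGraph r).edist x y = 2 :=
      edist_eq_two_iff.mpr ⟨hxy, by simp [starGraph_adj, hr],
        ⟨r, by simp [mem_commonNeighbors, starGraph_adj, hr.1, hr.2]⟩⟩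
    simp [dist, this]

variable [Fintype V]

theorem ecc_starGraph (hn : 3 ≤ Fintype.card V) (r x : V) :
    (starGraph r).ecc x = if x = r then 1 else 2 := by
  obtain ⟨y, hyx, hyr⟩ := ENat.exists_ne_ne_of_three_le (by simpa using hn) x r
  refine le_antisymm (Finset.sup_le fun z _ => ?_) ?_
  · rw [dist_starGraph]
    split_ifs <;> simp_all
  · refine le_trans ?_ (Finset.le_sup (Finset.mem_univ y))
    rw [dist_starGraph]
    split_ifs <;> simp_all

theorem eccMatrix_starGraph (hn : 3 ≤ Fintype.card V) (r : V) :
    (starGraph r).eccMatrix =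
      of fun x y => if x = y then 0 else if x = r ∨ y = r then 1 else 2 := by
  ext x y
  simp only [eccMatrix, of_apply, dist_starGraph, ecc_starGraph hn]
  split_ifs <;> simp_all

theorem eccMatrix_starGraph_add_two_smul_one (hn : 3 ≤ Fintype.card V) (r : V) :
    (starGraph r).eccMatrix + (2 : ℝ) • 1 =
      vecMulVec 1 1 + vecMulVec (1 - Pi.single r 1) (1 - Pi.single r 1) +
        vecMulVec (Pi.single r 1) (Pi.single r 1) := by
  ext x y
  simp only [eccMatrix_starGraph hn, Matrix.add_apply, of_apply, Matrix.smul_apply, one_apply,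
    vecMulVec_apply, Pi.sub_apply, Pi.one_apply, Pi.single_apply]
  split_ifs <;> simp_all <;> norm_num

theorem posSemidef_eccMatrix_starGraph_add_two_smul_one (hn : 3 ≤ Fintype.card V) (r : V) :
    ((starGraph r).eccMatrix + (2 : ℝ) • 1).PosSemidef := by
  rw [eccMatrix_starGraph_add_two_smul_one hn]
  have hsq (a : V → ℝ) : (vecMulVec a a).PosSemidef := by
    simpa using posSemidef_vecMulVec_self_star a
  exact ((hsq 1).add (hsq _)).add (hsq _)

theorem sInf_spectrum_eccMatrix_starGraph (hn : 3 ≤ Fintype.card V) (r : V) :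
    sInf (spectrum ℝ (starGraph r).eccMatrix) = -2 := by
  have : Nonempty V := ⟨r⟩
  obtain ⟨x, hxr, -⟩ := ENat.exists_ne_ne_of_three_le (by simpa using hn) r r
  obtain ⟨y, hyx, hyr⟩ := ENat.exists_ne_ne_of_three_le (by simpa using hn) x r
  have hpsd : ((starGraph r).eccMatrix - (-2 : ℝ) • 1).PosSemidef := by
    simpa only [neg_smul, sub_neg_eq_add] using posSemidef_eccMatrix_starGraph_add_two_smul_one hn r
  refine le_antisymm ?_ (((eccMatrix_isHermitian _).le_sInf_spectrum_iff _).2 hpsd)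
  calc sInf (spectrum ℝ (starGraph r).eccMatrix) ≤ -(starGraph r).eccMatrix x y :=
        (eccMatrix_isHermitian _).sInf_spectrum_le_neg_apply (eccMatrix_apply_self _) hyx.symm
    _ = -2 := by simp [eccMatrix_starGraph hn, hxr, hyr, hyx.symm]

end Star

end SimpleGraph

/-- For a tree `T` on `n ≥ 3` vertices, the least eigenvalue of the eccentricity matrix
is at most `-2`, with equality if and only if `T` is the star `K_{1,n-1}`. -/
theorem eccMatrix_least_eigenvalue_le_neg_two {V : Type*} [Fintype V] [DecidableEq V]
    (G : SimpleGraph V) (hT : G.IsTree) (hn : 3 ≤ Fintype.card V) :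
    sInf (spectrum ℝ G.eccMatrix) ≤ -2 ∧
      (sInf (spectrum ℝ G.eccMatrix) = -2 ↔ ∃ v : V, ∀ w : V, w ≠ v → G.Adj v w) := by
  have : Nontrivial V := Fintype.one_lt_card_iff_nontrivial.mp (by omega)
  by_cases hstar : ∃ v : V, ∀ w : V, w ≠ v → G.Adj v w
  · obtain ⟨v, hv⟩ := hstar
    obtain rfl : G = SimpleGraph.starGraph v :=
      hT.isAcyclic.eq_starGraph_of_isUniversal fun w hw => hv w hw.symm
    have hinf := SimpleGraph.sInf_spectrum_eccMatrix_starGraph hn v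
    exact ⟨hinf.le, iff_of_true hinf ⟨v, hv⟩⟩
  · have hdiam : 3 ≤ G.diam := by
      by_contra! hdiam
      obtain ⟨v, hv⟩ := hT.exists_isUniversal_of_diam_le_two (by omega)
      exact hstar ⟨v, fun w hw => hv hw.symm⟩
    have hinf : sInf (spectrum ℝ G.eccMatrix) ≤ -3 :=
      (SimpleGraph.sInf_spectrum_eccMatrix_le_neg_diam hT.connected).trans
        (neg_le_neg (by exact_mod_cast hdiam))
    exact ⟨hinf.trans (by norm_num), iff_of_false (by linarith) hstar⟩
end

section
/- Let W_{n+1} be the wheel on n+1 vertices (n ≥ 4), and let 2, λ₂, …, λ_n be the eigenvalues of the adjacency matrix of the cycle C_n. Then the spectrum of the eccentricity matrix of W_{n+1} is {(n−3) ± √((n−3)² + n) each with multiplicity 1} ∪ {−2(λ_i + 1) : i = 2, …, n}. -/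
open Matrix

open Polynomial

/-- The join `G ∨ K₁`: a new vertex adjacent to every vertex of `G`. -/
def joinK1 {V : Type*} (G : SimpleGraph V) : SimpleGraph (V ⊕ Unit) :=
  SimpleGraph.fromRel fun x y =>
    (∃ u v, x = Sum.inl u ∧ y = Sum.inl v ∧ G.Adj u v) ∨
    (∃ u, x = Sum.inl u ∧ y = Sum.inr ())

/-!
For `n ≥ 4` no rim vertex of the wheel is adjacent to all others, so rim vertices have
eccentricity `2`, the hub has eccentricity `1`, and `ε(W_{n+1})` is the block matrix
`[[2 A(C̄ₙ), J], [J, 0]]` with `A(C̄ₙ) = J - I - A(Cₙ)`. Since `Cₙ` is regular, the all-ones vector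
is an eigenvector of every matrix in sight; block elimination along it splits the
characteristic polynomial into the quadratic `x² - 2(n - 3)x - n` and the characteristic
polynomial of `-2(I + A(Cₙ))` with the eigenvalue belonging to the all-ones vector removed.
-/

namespace Matrix

variable {R n : Type*} [CommRing R] [Fintype n] [DecidableEq n]

theorem det_fromBlocks_sub_smul_of_one_mul (D : Matrix n n R) (d a t : R)
    (hD : D *ᵥ 1 = d • 1) :
    (fromBlocks (D - a • of 1) (-of 1) (-of 1) (scalar Unit t)).det * d =
      D.det * (t * d - Fintype.card n * (1 + a * t)) := by
  have hrow : ∀ i, ∑ k, D i k = d := fun i => by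
    simpa [mulVec, dotProduct] using congrFun hD i
  set N := fromBlocks (D - a • of 1) (-of 1) (-of 1) (scalar Unit t)
  -- `L` clears the `a • of 1` block using the last row; `U` then clears the upper right block,
  -- because the all-ones vector is an eigenvector of `D`.
  let L : Matrix (n ⊕ Unit) (n ⊕ Unit) R := fromBlocks 1 (-a • of 1) 0 1
  let U : Matrix (n ⊕ Unit) (n ⊕ Unit) R := fromBlocks 1 ((1 + a * t) • of 1) 0 (scalar Unit d)
  have hLNU : L * N * U =
      fromBlocks D 0 (-of 1) (scalar Unit (t * d - Fintype.card n * (1 + a * t))) := by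
    ext (i | ⟨⟨⟩⟩) (j | ⟨⟨⟩⟩) <;>
      simp [L, U, N, fromBlocks_multiply, mul_apply, one_apply, ← Finset.sum_mul, hrow] <;> ring
  calc N.det * d = (L * N * U).det := by simp [L, U, det_mul, det_fromBlocks_zero₂₁]
    _ = _ := by simp [hLNU, det_fromBlocks_zero₁₂]

theorem charpoly_fromBlocks_add_smul_of_one (B : Matrix n n R) (c a : R) (hB : B *ᵥ 1 = c • 1) :
    (fromBlocks (B + a • of 1) (of 1) (of 1) (0 : Matrix Unit Unit R)).charpoly * (X - C c) =
      B.charpoly * (X ^ 2 - C (c + a * Fintype.card n) * X - C (Fintype.card n : R)) := by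
  have hrow : ∀ i, ∑ k, B i k = c := fun i => by
    simpa [mulVec, dotProduct] using congrFun hB i
  have hD : charmatrix B *ᵥ 1 = (X - C c) • 1 := by
    funext i
    simp [mulVec, dotProduct, charmatrix, diagonal_apply, Finset.sum_sub_distrib, ← map_sum,
      hrow]
  have hblock : charmatrix (fromBlocks (B + a • of 1) (of 1) (of 1) (0 : Matrix Unit Unit R)) =
      fromBlocks (charmatrix B - C a • of 1) (-of 1) (-of 1) (scalar Unit X) := by
    rw [charmatrix_fromBlocks]
    congr 1
    · ext i j : 1
      by_cases h : i = j <;> simp [h] <;> ring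
    · ext
      simp
  rw [charpoly, hblock, det_fromBlocks_sub_smul_of_one_mul _ _ _ _ hD, charpoly]
  simp only [map_add, map_mul, map_natCast]
  ring

theorem charpoly_smul_add_scalar {K : Type*} [Field K] [Infinite K] (A : Matrix n n K)
    {s : Multiset K} (hA : A.charpoly = (s.map fun μ => X - C μ).prod) {r : K} (hr : r ≠ 0)
    (t : K) : (r • A + scalar n t).charpoly = (s.map fun μ => X - C (r * μ + t)).prod := by
  have hcard : Multiset.card s = Fintype.card n := by
    simpa [charpoly_natDegree_eq_dim, natDegree_multiset_prod_X_sub_C_eq_card]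
      using (congrArg natDegree hA).symm
  refine Polynomial.funext fun x => ?_
  have hscale : scalar n x - (r • A + scalar n t) = r • (scalar n ((x - t) / r) - A) := by
    ext i j
    by_cases h : i = j <;> simp [h]
    field_simp
    ring
  calc (r • A + scalar n t).charpoly.eval x
      = r ^ Fintype.card n * A.charpoly.eval ((x - t) / r) := by
        rw [eval_charpoly, hscale, det_smul, eval_charpoly]
    _ = (s.map fun μ => r * ((x - t) / r - μ)).prod := by
        rw [Multiset.prod_map_mul, Multiset.map_const', Multiset.prod_replicate, hcard, hA,
          eval_multiset_prod, Multiset.map_map]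
        simp
    _ = _ := by
        rw [eval_multiset_prod, Multiset.map_map]
        refine congrArg _ (Multiset.map_congr rfl fun μ _ => ?_)
        simp only [Function.comp_apply, eval_sub, eval_X, eval_C]
        field_simp
        ring

end Matrix

theorem Polynomial.X_sq_sub_C_two_mul_X_sub_C_eq_mul (b c : ℝ) (h : 0 ≤ b ^ 2 + c) :
    X ^ 2 - C (2 * b) * X - C c =
      (X - C (b + √(b ^ 2 + c))) * (X - C (b - √(b ^ 2 + c))) := by
  have hsq := Real.sq_sqrt h
  set s := √(b ^ 2 + c)
  rw [show 2 * b = (b + s) + (b - s) by ring, show c = -((b + s) * (b - s)) by nlinarith]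
  simp only [map_add, map_sub, map_mul, map_neg]
  ring

namespace SimpleGraph

variable {V : Type*} (G : SimpleGraph V)

@[simp]
theorem joinK1_adj_inl_inl {u v : V} : (joinK1 G).Adj (.inl u) (.inl v) ↔ G.Adj u v := by
  simp only [joinK1, fromRel_adj]
  aesop (add safe forward Adj.symm)

@[simp]
theorem joinK1_adj_inl_inr (u : V) : (joinK1 G).Adj (.inl u) (.inr ()) := by
  simp [joinK1]

theorem joinK1_dist_inl_inr (u : V) : (joinK1 G).dist (.inl u) (.inr ()) = 1 :=
  dist_eq_one_iff_adj.2 (G.joinK1_adj_inl_inr u)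

theorem joinK1_dist_inl_inl_le (u v : V) : (joinK1 G).dist (.inl u) (.inl v) ≤ 2 :=
  dist_le ((G.joinK1_adj_inl_inr u).toWalk.append (G.joinK1_adj_inl_inr v).symm.toWalk)

theorem joinK1_dist_inl_inl_eq_two_iff {u v : V} :
    (joinK1 G).dist (.inl u) (.inl v) = 2 ↔ Gᶜ.Adj u v := by
  have hreach : (joinK1 G).Reachable (.inl u) (.inl v) :=
    (G.joinK1_adj_inl_inr u).reachable.trans (G.joinK1_adj_inl_inr v).symm.reachable
  have hle := G.joinK1_dist_inl_inl_le u v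
  have h0 := hreach.dist_eq_zero_iff
  have h1 : (joinK1 G).dist (.inl u) (.inl v) = 1 ↔ G.Adj u v := by
    rw [dist_eq_one_iff_adj, joinK1_adj_inl_inl]
  simp only [Sum.inl.injEq] at h0
  rw [compl_adj, Ne, ← h0, ← h1]
  omega

theorem adjMatrix_compl_eq_of_one_sub_one_sub_adjMatrix {α : Type*} [AddGroupWithOne α]
    [DecidableEq V] [DecidableRel G.Adj] :
    Gᶜ.adjMatrix α = of 1 - 1 - G.adjMatrix α := by
  ext i j
  by_cases h : i = j <;> by_cases hadj : G.Adj i j <;> simp [h, hadj, one_apply]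

variable [Fintype V]

theorem joinK1_ecc_inr [Nonempty V] : (joinK1 G).ecc (.inr ()) = 1 := by
  inhabit V
  refine le_antisymm (Finset.sup_le ?_) ?_
  · rintro (u | ⟨⟨⟩⟩) -
    · rw [dist_comm, joinK1_dist_inl_inr]
    · simp
  · rw [← G.joinK1_dist_inl_inr default, dist_comm]
    exact Finset.le_sup (Finset.mem_univ _)

theorem joinK1_ecc_inl {u : V} (hu : ∃ v, Gᶜ.Adj u v) : (joinK1 G).ecc (.inl u) = 2 := by
  obtain ⟨v, huv⟩ := hu
  refine le_antisymm (Finset.sup_le ?_) ?_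
  · rintro (w | ⟨⟨⟩⟩) -
    · exact G.joinK1_dist_inl_inl_le u w
    · simp [joinK1_dist_inl_inr]
  · rw [← G.joinK1_dist_inl_inl_eq_two_iff.2 huv]
    exact Finset.le_sup (Finset.mem_univ _)

theorem eccMatrix_joinK1 [DecidableEq V] [DecidableRel G.Adj] (h : ∀ u, ∃ v, Gᶜ.Adj u v) :
    (joinK1 G).eccMatrix = fromBlocks ((2 : ℝ) • Gᶜ.adjMatrix ℝ) (of 1) (of 1) 0 := by
  ext (u | ⟨⟨⟩⟩) (v | ⟨⟨⟩⟩)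
  · by_cases huv : Gᶜ.Adj u v
    · simp [eccMatrix, joinK1_ecc_inl G (h _), G.joinK1_dist_inl_inl_eq_two_iff.2 huv, huv]
    · simp [eccMatrix, joinK1_ecc_inl G (h _), G.joinK1_dist_inl_inl_eq_two_iff, huv]
  · have : Nonempty V := ⟨u⟩
    simp [eccMatrix, joinK1_ecc_inl G (h _), joinK1_ecc_inr, joinK1_dist_inl_inr]
  · have : Nonempty V := ⟨v⟩
    simp [eccMatrix, joinK1_ecc_inl G (h _), joinK1_ecc_inr, dist_comm, joinK1_dist_inl_inr]
  · simp [eccMatrix]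

variable {G}

theorem IsRegularOfDegree.exists_compl_adj [DecidableRel G.Adj] {r : ℕ}
    (hreg : G.IsRegularOfDegree r) (hr : r + 1 < Fintype.card V) (u : V) : ∃ v, Gᶜ.Adj u v := by
  classical
  by_contra! h
  have hsub : Finset.univ.erase u ⊆ G.neighborFinset u := fun v hv => by
    simpa [(Finset.ne_of_mem_erase hv).symm] using h v
  have := Finset.card_le_card hsub
  rw [Finset.card_erase_of_mem (Finset.mem_univ u), card_neighborFinset_eq_degree,
    hreg.degree_eq, Finset.card_univ] at this
  omega

theorem charpoly_eccMatrix_joinK1_of_isRegular [DecidableEq V] [DecidableRel G.Adj] {r : ℕ}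
    (hreg : G.IsRegularOfDegree r) (hr : r + 1 < Fintype.card V) {s : Multiset ℝ}
    (hA : (G.adjMatrix ℝ).charpoly.roots = ↑r ::ₘ s) :
    (joinK1 G).eccMatrix.charpoly =
      (X ^ 2 - C (2 * ((Fintype.card V : ℝ) - 1 - r)) * X - C (Fintype.card V : ℝ)) *
        (s.map fun μ => X - C (-2 * (μ + 1))).prod := by
  have hsplit : (G.adjMatrix ℝ).charpoly = ((↑r ::ₘ s).map fun μ => X - C μ).prod := by
    rw [← hA]
    exact (G.isHermitian_adjMatrix ℝ).splits_charpoly.eq_prod_roots_of_monic (charpoly_monic _)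
  set B : Matrix V V ℝ := (-2 : ℝ) • G.adjMatrix ℝ + scalar V (-2)
  have hcompl : (2 : ℝ) • Gᶜ.adjMatrix ℝ = B + (2 : ℝ) • of 1 := by
    rw [adjMatrix_compl_eq_of_one_sub_one_sub_adjMatrix]
    ext i j
    by_cases h : i = j <;> simp [B, h, one_apply]
    split_ifs <;> ring
  have hB : B *ᵥ 1 = (-2 * r + -2 : ℝ) • 1 := by
    funext i
    simp [B, add_mulVec, neg_mulVec, smul_mulVec, adjMatrix_mulVec_apply, hreg.degree_eq]
  have hχB : B.charpoly =
      (X - C (-2 * (r : ℝ) + -2)) * (s.map fun μ => X - C (-2 * (μ + 1))).prod := by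
    rw [charpoly_smul_add_scalar _ hsplit (by norm_num : (-2 : ℝ) ≠ 0), Multiset.map_cons,
      Multiset.prod_cons]
    exact congrArg _ (congrArg _ (Multiset.map_congr rfl fun μ _ => by ring_nf))
  have key := charpoly_fromBlocks_add_smul_of_one B _ 2 hB
  rw [hχB, show -2 * (r : ℝ) + -2 + 2 * Fintype.card V = 2 * (Fintype.card V - 1 - r) by ring]
    at key
  rw [eccMatrix_joinK1 G (hreg.exists_compl_adj hr), hcompl]
  exact mul_right_cancel₀ (X_sub_C_ne_zero _) (key.trans (by ring))

theorem roots_charpoly_eccMatrix_joinK1_of_isRegular [DecidableEq V] [DecidableRel G.Adj]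
    {r : ℕ} (hreg : G.IsRegularOfDegree r) (hr : r + 1 < Fintype.card V) {s : Multiset ℝ}
    (hA : (G.adjMatrix ℝ).charpoly.roots = ↑r ::ₘ s) :
    (joinK1 G).eccMatrix.charpoly.roots =
      ((Fintype.card V - 1 - r) + √((Fintype.card V - 1 - r) ^ 2 + Fintype.card V)) ::ₘ
        ((Fintype.card V - 1 - r) - √((Fintype.card V - 1 - r) ^ 2 + Fintype.card V)) ::ₘ
          s.map fun μ => -2 * (μ + 1) := by
  rw [charpoly_eccMatrix_joinK1_of_isRegular hreg hr hA,
    X_sq_sub_C_two_mul_X_sub_C_eq_mul _ _ (by positivity), mul_assoc, ← Multiset.prod_cons,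
    ← Multiset.prod_cons]
  refine (congrArg roots ?_).trans (roots_multiset_prod_X_sub_C _)
  rw [Multiset.map_cons, Multiset.map_cons, Multiset.map_map]
  rfl

theorem cycleGraph_isRegularOfDegree_two {n : ℕ} (hn : 3 ≤ n) :
    (cycleGraph n).IsRegularOfDegree 2 := by
  obtain ⟨m, rfl⟩ := Nat.exists_eq_add_of_le' hn
  exact fun _ => cycleGraph_degree_three_le

end SimpleGraph

/-- The wheel `W_{n+1} = Cₙ ∨ K₁` (`n ≥ 4`): if the adjacency eigenvalues of the cycle
`Cₙ` are `2, λ₂, …, λₙ`, then the spectrum of the eccentricity matrix of `W_{n+1}` is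
`(n-3) ± √((n-3)² + n)` together with `-2(λᵢ + 1)` for `i = 2, …, n`. -/
theorem eccMatrix_wheel_spectrum (n : ℕ) (hn : 4 ≤ n) (lam : Fin (n - 1) → ℝ)
    (hspec : ((SimpleGraph.cycleGraph n).adjMatrix ℝ).charpoly.roots =
      (2 : ℝ) ::ₘ Multiset.map lam Finset.univ.val) :
    (joinK1 (SimpleGraph.cycleGraph n)).eccMatrix.charpoly.roots =
      (((n : ℝ) - 3) + Real.sqrt (((n : ℝ) - 3) ^ 2 + n)) ::ₘ
        (((n : ℝ) - 3) - Real.sqrt (((n : ℝ) - 3) ^ 2 + n)) ::ₘ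
          Multiset.map (fun i => -2 * (lam i + 1)) Finset.univ.val := by
  have hreg := SimpleGraph.cycleGraph_isRegularOfDegree_two (n := n) (by omega)
  rw [SimpleGraph.roots_charpoly_eccMatrix_joinK1_of_isRegular hreg (by simp; omega)
      (by rw [hspec, Nat.cast_ofNat]), Fintype.card_fin, Multiset.map_map,
    show (n : ℝ) - 1 - (2 : ℕ) = n - 3 by push_cast; ring]
  rfl
end
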